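/- arXiv:1408.7110 — 2 statements merged into one kernel-verified Lean document; each statement's English description precedes it below -/
import Mathlib

section
/- Let n ∈ ℕ and suppose that for some 1 ≤ μ ≤ n the Chebyshev-partition interval I_μ is contained in an interval J ⊂ [-1,1] with |J| ≤ c₀|I_μ|. Then there is m ∈ ℕ depending only on c₀ (one may take m = ⌊400 c₀⌋ + 2) such that J has nonempty intersection with at most m of the intervals I_i, 1 ≤ i ≤ n. -/
noncomputable def cheb (n i : ℕ) : ℝ := Real.cos (i * Real.pi / n)

/-!
Write `x_m = cheb n m`. Then `x_m - x_{m+1} = 2 sin (π/2n) sin θ_m` with `θ_m = (2m+1)π/2n`, and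
concavity of `sin` on `[0, π]` gives `θ sin θ' ≤ θ' sin θ` for `θ ≤ θ'`. Summing this over `s`
consecutive angles shows that any `s` consecutive intervals adjacent to `I_μ` have total length at
least `s |I_μ| / 3`. If `J ⊇ I_μ` meets the intervals `I_k` and `I_l` (`k ≤ l` extreme), then `J`
contains `I_μ` together with all intervals strictly between `I_k` and `I_l`, so the number of
intervals met by `J` is at most `3 |J| / |I_μ| ≤ 3 c₀`.
-/

open Real Finset

lemma mul_sin_le_mul_sin {x y : ℝ} (hx : 0 ≤ x) (hxy : x ≤ y) (hy : y ≤ π) :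
    x * sin y ≤ y * sin x := by
  rcases hx.eq_or_lt with rfl | hx
  · simp
  have hslope := strictConcaveOn_sin_Icc.concaveOn.antitoneOn_slope_gt (x := 0)
    ⟨le_rfl, pi_pos.le⟩ ⟨⟨hx.le, hxy.trans hy⟩, hx⟩ ⟨⟨hx.le.trans hxy, hy⟩, hx.trans_le hxy⟩ hxy
  simp only [slope_def_field, sin_zero, sub_zero] at hslope
  rwa [div_le_div_iff₀ (hx.trans_le hxy) hx, mul_comm, mul_comm (sin x)] at hslope

lemma natCast_mul_sin_add_le_three_mul_sum {t h : ℝ} (s : ℕ) (hh : 0 < h) (ht : h / 2 ≤ t) (hts : t + s * h ≤ π) :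
    s * sin (t + s * h) ≤ 3 * ∑ j ∈ range s, sin (t + j * h) := by
  have hchord : ∀ j ∈ range s, (t + j * h) * sin (t + s * h) ≤ (t + s * h) * sin (t + j * h) := by
    intro j hj
    have : (j : ℝ) ≤ s := by exact_mod_cast (mem_range.1 hj).le
    exact mul_sin_le_mul_sin (by nlinarith) (by gcongr) hts
  have hsum := sum_le_sum hchord
  rw [← sum_mul, ← mul_sum, sum_add_distrib, ← sum_mul, sum_const, card_range, nsmul_eq_mul] at hsum
  have hgauss : ∀ m : ℕ, (∑ j ∈ range m, (j : ℝ)) * 2 = m * (m - 1) := by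
    intro m
    induction m with
    | zero => simp
    | succ k ih => rw [sum_range_succ, add_mul, ih]; push_cast; ring
  have hT : 0 < t + s * h := add_pos_of_pos_of_nonneg (by linarith) (by positivity)
  have hsin : 0 ≤ sin (t + s * h) := sin_nonneg_of_nonneg_of_le_pi hT.le hts
  have hs : (0 : ℝ) ≤ s * (s - 1) := by
    rw [← hgauss]; positivity
  refine le_of_mul_le_mul_left ?_ hT
  calc (t + s * h) * (s * sin (t + s * h))
      ≤ 3 * ((s * t + (∑ j ∈ range s, (j : ℝ)) * h) * sin (t + s * h)) := by
        nlinarith [mul_nonneg (mul_nonneg (sub_nonneg.2 ht) (Nat.cast_nonneg s)) hsin,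
          mul_nonneg (mul_nonneg hs hh.le) hsin,
          congrArg (fun x => x * (h * sin (t + s * h))) (hgauss s)]
    _ ≤ (t + s * h) * (3 * ∑ j ∈ range s, sin (t + j * h)) := by linarith

lemma cheb_sub_cheb_succ (n m : ℕ) :
    cheb n m - cheb n (m + 1) = 2 * sin (π / (2 * n)) * sin ((2 * m + 1) * π / (2 * n)) := by
  rw [cheb, cheb, cos_sub_cos]
  push_cast
  rw [show ((m:ℝ) * π / n - (m + 1) * π / n) / 2 = -(π / (2 * n)) by ring,
    show ((m:ℝ) * π / n + (m + 1) * π / n) / 2 = (2 * m + 1) * π / (2 * n) by ring, sin_neg]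
  ring

lemma cheb_self_sub {n m : ℕ} (hmn : m ≤ n) (hn : 0 < n) : cheb n (n - m) = - cheb n m := by
  rw [cheb, cheb, Nat.cast_sub hmn, ← cos_pi_sub]
  congr 1
  field_simp

lemma cheb_succ_lt {n m : ℕ} (hm : m < n) : cheb n (m + 1) < cheb n m := by
  have hn : (0 : ℝ) < n := by exact_mod_cast (Nat.zero_le m).trans_lt hm
  apply cos_lt_cos_of_nonneg_of_le_pi (by positivity)
  · rw [div_le_iff₀ hn]
    have : ((m + 1 : ℕ) : ℝ) ≤ n := by exact_mod_cast hm
    nlinarith [pi_pos]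
  · gcongr
    simp

lemma mul_cheb_sub_succ_le_left {n i s : ℕ} (h : i + s < n) :
    s * (cheb n (i + s) - cheb n (i + s + 1)) ≤ 3 * (cheb n i - cheb n (i + s)) := by
  have hn : (1 : ℝ) ≤ n := by exact_mod_cast (by omega : 1 ≤ n)
  have htel : cheb n i - cheb n (i + s) = ∑ j ∈ range s, (cheb n (i + j) - cheb n (i + j + 1)) := by
    simpa [add_assoc] using (sum_range_sub' (fun j => cheb n (i + j)) s).symm
  have hangle : ∀ m : ℕ,
      (2 * ((i + m : ℕ) : ℝ) + 1) * π / (2 * n) = (2 * i + 1) * π / (2 * n) + m * (π / n) := by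
    intro m; push_cast; field_simp [(by linarith : (n : ℝ) ≠ 0)]; ring
  rw [htel]
  simp_rw [cheb_sub_cheb_succ, ← mul_sum, hangle]
  have hsin : 0 ≤ 2 * sin (π / (2 * n)) :=
    mul_nonneg zero_le_two (sin_nonneg_of_nonneg_of_le_pi (by positivity)
      (div_le_self pi_pos.le (by linarith)))
  have key := natCast_mul_sin_add_le_three_mul_sum s (t := (2 * i + 1) * π / (2 * n)) (h := π / n)
    (div_pos pi_pos (by linarith))
    (by rw [div_div, mul_comm (n : ℝ)]; gcongr; nlinarith [pi_pos, (Nat.cast_nonneg i : (0:ℝ) ≤ i)])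
    (by
      rw [← hangle, div_le_iff₀ (by linarith)]
      have : ((i + s : ℕ) : ℝ) + 1 ≤ n := by exact_mod_cast h
      nlinarith [pi_pos])
  linarith [mul_le_mul_of_nonneg_left key hsin]

lemma mul_cheb_sub_succ_le_right {n ν s : ℕ} (h : ν + 1 + s ≤ n) :
    s * (cheb n ν - cheb n (ν + 1)) ≤ 3 * (cheb n (ν + 1) - cheb n (ν + 1 + s)) := by
  have hn : 0 < n := by omega
  have hleft := mul_cheb_sub_succ_le_left (n := n) (i := n - (ν + 1 + s)) (s := s) (by omega)
  rw [show n - (ν + 1 + s) + s = n - (ν + 1) by omega, show n - (ν + 1) + 1 = n - ν by omega,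
    cheb_self_sub (by omega) hn, cheb_self_sub (by omega) hn, cheb_self_sub h hn] at hleft
  linarith

lemma mul_cheb_sub_succ_le {n i ν j : ℕ} (hi : i ≤ ν) (hj : ν + 1 ≤ j) (hjn : j ≤ n) :
    ((j : ℝ) - i + 2) * (cheb n ν - cheb n (ν + 1)) ≤ 3 * (cheb n i - cheb n j) := by
  obtain ⟨s, rfl⟩ := Nat.exists_eq_add_of_le hi
  obtain ⟨r, rfl⟩ := Nat.exists_eq_add_of_le hj
  have hleft := mul_cheb_sub_succ_le_left (n := n) (i := i) (s := s) (by omega)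
  have hright := mul_cheb_sub_succ_le_right (ν := i + s) (s := r) hjn
  push_cast
  linarith

open Classical in
lemma card_filter_mul_le {n ν : ℕ} (hν : ν < n) {a b : ℝ}
    (hI : Set.Icc (cheb n (ν + 1)) (cheb n ν) ⊆ Set.Icc a b) :
    ((Icc 1 n).filter
        (fun i => (Set.Icc (cheb n i) (cheb n (i - 1)) ∩ Set.Icc a b).Nonempty)).card *
      (cheb n ν - cheb n (ν + 1)) ≤ 3 * (b - a) := by
  set F := (Icc 1 n).filter
    (fun i => (Set.Icc (cheb n i) (cheb n (i - 1)) ∩ Set.Icc a b).Nonempty)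
  have hgap := (cheb_succ_lt hν).le
  have hνF : ν + 1 ∈ F :=
    mem_filter.2 ⟨mem_Icc.2 ⟨by omega, hν⟩, cheb n (ν + 1), ⟨le_rfl, hgap⟩, hI ⟨le_rfl, hgap⟩⟩
  have hFne : F.Nonempty := ⟨_, hνF⟩
  obtain ⟨hk, p, hpI, hpJ⟩ := mem_filter.1 (F.min'_mem hFne)
  obtain ⟨hl, q, hqI, hqJ⟩ := mem_filter.1 (F.max'_mem hFne)
  set k := F.min' hFne
  set l := F.max' hFne
  rw [mem_Icc] at hk hl
  have hkν : k ≤ ν + 1 := F.min'_le _ hνF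
  have hνl : ν + 1 ≤ l := F.le_max' _ hνF
  have hcard : F.card ≤ l + 1 - k := by
    simpa using card_le_card (fun i hi => mem_Icc.2 ⟨F.min'_le i hi, F.le_max' i hi⟩ : F ⊆ Icc k l)
  -- `[x_j, x_i] ⊆ [a, b]` contains `I_{ν+1}` and every interval strictly between `I_k` and `I_l`
  set i := min k ν with hi
  set j := max (l - 1) (ν + 1) with hj
  have hb : cheb n i ≤ b := by
    rcases min_choice k ν with h | h <;> rw [hi, h]
    exacts [hpI.1.trans hpJ.2, (hI ⟨hgap, le_rfl⟩).2]
  have ha : a ≤ cheb n j := by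
    rcases max_choice (l - 1) (ν + 1) with h | h <;> rw [hj, h]
    exacts [hqJ.1.trans hqI.2, (hI ⟨le_rfl, hgap⟩).1]
  have hcard' : (F.card : ℝ) ≤ j - i + 2 := by
    have : F.card + i ≤ j + 2 := by omega
    have : (F.card : ℝ) + i ≤ j + 2 := by exact_mod_cast this
    linarith
  calc (F.card : ℝ) * (cheb n ν - cheb n (ν + 1))
      ≤ (j - i + 2) * (cheb n ν - cheb n (ν + 1)) :=
        mul_le_mul_of_nonneg_right hcard' (sub_nonneg.2 hgap)
    _ ≤ 3 * (cheb n i - cheb n j) := mul_cheb_sub_succ_le (min_le_right _ _) (le_max_right _ _)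
        (max_le (by omega) (by omega))
    _ ≤ 3 * (b - a) := by linarith

open Classical in
theorem stmt5_general (c0 : ℝ) (n : ℕ)
    (μ : ℕ) (hμ1 : 1 ≤ μ) (hμn : μ ≤ n)
    (a b : ℝ)
    (hIJ : Set.Icc (cheb n μ) (cheb n (μ-1)) ⊆ Set.Icc a b)
    (hlen : b - a ≤ c0 * (cheb n (μ-1) - cheb n μ)) :
    ((Finset.Icc 1 n).filter
        (fun i => (Set.Icc (cheb n i) (cheb n (i-1)) ∩ Set.Icc a b).Nonempty)).card
      ≤ ⌊400 * c0⌋₊ + 2 := by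
  obtain ⟨ν, rfl⟩ := Nat.exists_eq_add_of_le' hμ1
  rw [Nat.add_sub_cancel] at hIJ hlen
  set F := (Finset.Icc 1 n).filter
    (fun i => (Set.Icc (cheb n i) (cheb n (i - 1)) ∩ Set.Icc a b).Nonempty)
  have hgap := sub_pos.2 (cheb_succ_lt (n := n) (m := ν) (by omega))
  have hcard : (F.card : ℝ) * (cheb n ν - cheb n (ν + 1)) ≤ 3 * c0 * (cheb n ν - cheb n (ν + 1)) :=
    (card_filter_mul_le (by omega) hIJ).trans (by linarith)
  have hcard_le := le_of_mul_le_mul_right hcard hgap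
  exact (Nat.le_floor (by linarith [Nat.cast_nonneg (α := ℝ) F.card])).trans (Nat.le_add_right _ _)

open Classical in
theorem stmt5 (c0 : ℝ) (hc0 : 0 < c0) (n : ℕ) (hn : 1 ≤ n)
    (μ : ℕ) (hμ1 : 1 ≤ μ) (hμn : μ ≤ n)
    (a b : ℝ) (hab : a ≤ b) (hJ : Set.Icc a b ⊆ Set.Icc (-1:ℝ) 1)
    (hIJ : Set.Icc (cheb n μ) (cheb n (μ-1)) ⊆ Set.Icc a b)
    (hlen : b - a ≤ c0 * (cheb n (μ-1) - cheb n μ)) :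
    ((Finset.Icc 1 n).filter
        (fun i => (Set.Icc (cheb n i) (cheb n (i-1)) ∩ Set.Icc a b).Nonempty)).card
      ≤ ⌊400 * c0⌋₊ + 2 :=
  stmt5_general c0 n μ hμ1 hμn a b hIJ hlen
end

section
/- Let 1 ≤ p < ∞, r, n ∈ ℕ, z ∈ [-1,1], and let I ⊂ [-1,1] be an interval containing z with |x - z| ≤ A δ_n(z) for all x ∈ I, where A > 0. Let Q be a polynomial and q_r its Taylor polynomial of degree < r at z (so (Q - q_r)^{(ν)}(z) = 0 for 0 ≤ ν ≤ r-1). Then for every nonnegative weight function w, (∫_I |Q(x) - q_r(x)|^p w(x) dx)^{1/p} ≤ c · (A δ_n(z))^{r - 1/p} · ‖Q^{(r)}‖_{L^p(I)} · (∫_I w)^{1/p}, where c depends only on r and p. -/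
/-! Write `D = A δₙ(z)`. Since `Q - q` vanishes to order `r` at `z` and `(Q - q)⁽ʳ⁾ = Q⁽ʳ⁾`,
integrating `r` times from `z` gives `|Q - q| ≤ ‖Q⁽ʳ⁾‖_{L¹(I)} D^{r-1}` on `I`. Hölder's inequality
on `I`, whose length is at most `2D`, bounds the `L¹` norm by `(2D)^{1-1/p} ‖Q⁽ʳ⁾‖_{Lᵖ(I)}`,
and the weight only enters through `(∫_I w)^{1/p}`. -/

open MeasureTheory

noncomputable def deltan (n : ℕ) (x : ℝ) : ℝ := Real.sqrt (1 - x^2) / n + 1 / (n:ℝ)^2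

open Set Polynomial
open scoped Interval

lemma deltan_pos {n : ℕ} (hn : 0 < n) (x : ℝ) : 0 < deltan n x := by
  have : (0 : ℝ) < n := by exact_mod_cast hn
  unfold deltan
  positivity

lemma rpow_le_two_mul_rpow {L D e : ℝ} (hL : 0 ≤ L) (hLD : L ≤ 2 * D) (he₀ : 0 ≤ e)
    (he₁ : e ≤ 1) : L ^ e ≤ 2 * D ^ e :=
  calc L ^ e ≤ (2 * D) ^ e := Real.rpow_le_rpow hL hLD he₀
    _ = 2 ^ e * D ^ e := Real.mul_rpow zero_le_two (by linarith)
    _ ≤ 2 * D ^ e := by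
      refine mul_le_mul_of_nonneg_right ?_ (Real.rpow_nonneg (by linarith) e)
      simpa using Real.rpow_le_rpow_of_exponent_le one_le_two he₁

theorem integral_norm_le_measureReal_univ_rpow_mul {α E : Type*} [MeasurableSpace α]
    {μ : Measure α} [IsFiniteMeasure μ] [NormedAddCommGroup E] {f : α → E} {p : ℝ} (hp : 1 ≤ p)
    (hf : MemLp f (ENNReal.ofReal p) μ) :
    ∫ x, ‖f x‖ ∂μ ≤ μ.real univ ^ (1 - 1 / p) * (∫ x, ‖f x‖ ^ p ∂μ) ^ (1 / p) := by
  rcases hp.eq_or_lt with rfl | hp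
  · simp
  have hpq := Real.HolderConjugate.conjExponent hp
  have h := integral_mul_norm_le_Lp_mul_Lq hpq hf.norm (memLp_const (1 : ℝ))
  simp only [one_div, hpq.one_sub_inv]
  simpa [mul_comm] using h

theorem integral_Icc_abs_le_rpow_mul_integral_rpow {f : ℝ → ℝ} {a b p : ℝ}
    (hf : ContinuousOn f (Icc a b)) (hab : a ≤ b) (hp : 1 ≤ p) :
    ∫ x in Icc a b, |f x| ≤ (b - a) ^ (1 - 1 / p) * (∫ x in Icc a b, |f x| ^ p) ^ (1 / p) := by
  obtain ⟨C, hC⟩ := isCompact_Icc.exists_bound_of_continuousOn hf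
  have hmem : MemLp f (ENNReal.ofReal p) (volume.restrict (Icc a b)) :=
    MemLp.of_bound (hf.aestronglyMeasurable measurableSet_Icc) C
      ((ae_restrict_iff' measurableSet_Icc).mpr (ae_of_all _ hC))
  simpa only [Real.norm_eq_abs, measureReal_restrict_apply_univ, Real.volume_real_Icc_of_le hab]
    using integral_norm_le_measureReal_univ_rpow_mul hp hmem

theorem integral_rpow_mul_rpow_le {α : Type*} [MeasurableSpace α] {μ : Measure α}
    {f w : α → ℝ} {p K : ℝ} (hp : 0 < p) (hK : 0 ≤ K) (hfK : ∀ᵐ x ∂μ, |f x| ≤ K)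
    (hw : ∀ x, 0 ≤ w x) (hw_int : Integrable w μ) :
    (∫ x, |f x| ^ p * w x ∂μ) ^ (1 / p) ≤ K * (∫ x, w x ∂μ) ^ (1 / p) := by
  have hle : ∫ x, |f x| ^ p * w x ∂μ ≤ K ^ p * ∫ x, w x ∂μ := by
    rw [← integral_const_mul]
    exact integral_mono_of_nonneg (ae_of_all _ fun x => mul_nonneg (by positivity) (hw x))
      (hw_int.const_mul _) (hfK.mono fun x hx =>
        mul_le_mul_of_nonneg_right (Real.rpow_le_rpow (abs_nonneg _) hx hp.le) (hw x))
  calc (∫ x, |f x| ^ p * w x ∂μ) ^ (1 / p)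
      ≤ (K ^ p * ∫ x, w x ∂μ) ^ (1 / p) :=
        Real.rpow_le_rpow (integral_nonneg fun x => mul_nonneg (by positivity) (hw x)) hle
          (by positivity)
    _ = K * (∫ x, w x ∂μ) ^ (1 / p) := by
      rw [Real.mul_rpow (by positivity) (integral_nonneg hw), one_div,
        Real.rpow_rpow_inv hK hp.ne']

namespace Polynomial

variable {P : ℝ[X]} {a b z x : ℝ}

lemma integral_eval_derivative_of_eval_eq_zero (hPz : P.eval z = 0) :
    ∫ u in z..x, P.derivative.eval u = P.eval x := by
  rw [intervalIntegral.integral_eq_sub_of_hasDerivAt (fun u _ => P.hasDerivAt u)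
    (P.derivative.continuous.intervalIntegrable _ _), hPz, sub_zero]

lemma abs_eval_le_integral_abs_derivative (hz : z ∈ Icc a b) (hx : x ∈ Icc a b)
    (hPz : P.eval z = 0) : |P.eval x| ≤ ∫ u in Icc a b, |P.derivative.eval u| :=
  calc |P.eval x| = ‖∫ u in z..x, P.derivative.eval u‖ := by
        rw [integral_eval_derivative_of_eval_eq_zero hPz, Real.norm_eq_abs]
    _ ≤ ∫ u in Ι z x, ‖P.derivative.eval u‖ := intervalIntegral.norm_integral_le_integral_norm_uIoc
    _ ≤ ∫ u in Icc a b, |P.derivative.eval u| :=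
      setIntegral_mono_set P.derivative.continuous.abs.integrableOn_Icc
        (ae_of_all _ fun _ => abs_nonneg _)
        (uIoc_subset_uIcc.trans (uIcc_subset_Icc hz hx)).eventuallyLE

lemma abs_eval_le_integral_abs_iterate_derivative_mul_pow (m : ℕ) (hz : z ∈ Icc a b)
    (hx : x ∈ Icc a b) (hP : ∀ ν ≤ m, (derivative^[ν] P).eval z = 0) :
    |P.eval x| ≤ (∫ u in Icc a b, |(derivative^[m + 1] P).eval u|) * |x - z| ^ m := by
  induction m generalizing P x with
  | zero => simpa using abs_eval_le_integral_abs_derivative hz hx (hP 0 le_rfl)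
  | succ m ih =>
    set M := ∫ u in Icc a b, |(derivative^[m + 1 + 1] P).eval u|
    have hM : 0 ≤ M := setIntegral_nonneg measurableSet_Icc fun _ _ => abs_nonneg _
    have hderiv : ∀ u ∈ Ι z x, ‖P.derivative.eval u‖ ≤ M * |x - z| ^ m := fun u hu => by
      have hP' : ∀ ν ≤ m, (derivative^[ν] P.derivative).eval z = 0 := fun ν hν => by
        simpa only [← Function.iterate_succ_apply] using hP (ν + 1) (by omega)
      have hbound := ih ((uIoc_subset_uIcc.trans (uIcc_subset_Icc hz hx)) hu) hP'
      rw [← Function.iterate_succ_apply] at hbound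
      calc ‖P.derivative.eval u‖ ≤ M * |u - z| ^ m := hbound
        _ ≤ M * |x - z| ^ m := by
          gcongr M * ?_ ^ m
          exact abs_sub_left_of_mem_uIcc (uIoc_subset_uIcc hu)
    have hPz : P.eval z = 0 := hP 0 (Nat.zero_le _)
    calc |P.eval x| = ‖∫ u in z..x, P.derivative.eval u‖ := by
          rw [integral_eval_derivative_of_eval_eq_zero hPz, Real.norm_eq_abs]
      _ ≤ M * |x - z| ^ m * |x - z| := intervalIntegral.norm_integral_le_of_norm_le_const hderiv
      _ = M * |x - z| ^ (m + 1) := by ring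

end Polynomial

theorem stmt12 (p : ℝ) (hp : 1 ≤ p) (r : ℕ) (hr : 1 ≤ r) :
    ∃ c : ℝ, 0 < c ∧ ∀ (n : ℕ), 1 ≤ n → ∀ (z a b A : ℝ) (w : ℝ → ℝ) (Q q : Polynomial ℝ),
      0 < A → Set.Icc a b ⊆ Set.Icc (-1:ℝ) 1 → z ∈ Set.Icc a b →
      (∀ x ∈ Set.Icc a b, |x - z| ≤ A * deltan n z) →
      q.degree < (r : WithBot ℕ) →
      (∀ ν < r, (Polynomial.derivative^[ν] (Q - q)).eval z = 0) →
      (∀ x, 0 ≤ w x) → IntegrableOn w (Set.Icc a b) →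
      (∫ x in Set.Icc a b, |Q.eval x - q.eval x| ^ p * w x) ^ (1/p) ≤
        c * (A * deltan n z) ^ ((r:ℝ) - 1/p) *
          (∫ x in Set.Icc a b, |(Polynomial.derivative^[r] Q).eval x| ^ p) ^ (1/p) *
          (∫ x in Set.Icc a b, w x) ^ (1/p) := by
  obtain ⟨m, rfl⟩ : ∃ m, r = m + 1 := ⟨r - 1, by omega⟩
  refine ⟨2, two_pos, fun n hn z a b A w Q q hA _ hz hdist hq hder hw hw_int => ?_⟩
  set D := A * deltan n z
  have hD : 0 < D := mul_pos hA (deltan_pos hn z)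
  have hab : a ≤ b := hz.1.trans hz.2
  have hlen : b - a ≤ 2 * D := by
    linarith [(abs_le.mp (hdist a ⟨le_rfl, hab⟩)).1, (abs_le.mp (hdist b ⟨hab, le_rfl⟩)).2]
  set M := ∫ u in Icc a b, |(derivative^[m + 1] Q).eval u|
  set N := (∫ x in Icc a b, |(derivative^[m + 1] Q).eval x| ^ p) ^ (1 / p)
  set W := (∫ x in Icc a b, w x) ^ (1 / p)
  have htaylor : ∀ x ∈ Icc a b, |Q.eval x - q.eval x| ≤ M * D ^ m := fun x hx => by
    have h := abs_eval_le_integral_abs_iterate_derivative_mul_pow m hz hx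
      fun ν hν => hder ν (Nat.lt_succ_of_le hν)
    rw [iterate_derivative_sub, iterate_derivative_eq_zero_of_degree_lt hq, sub_zero,
      eval_sub] at h
    exact h.trans (by gcongr; exact hdist x hx)
  have hp₀ : 0 < p := zero_lt_one.trans_le hp
  have hholder : M ≤ 2 * D ^ (1 - 1 / p) * N :=
    (integral_Icc_abs_le_rpow_mul_integral_rpow (derivative^[m + 1] Q).continuous.continuousOn
      hab hp).trans <| by
      gcongr
      exact rpow_le_two_mul_rpow (by linarith) hlen (sub_nonneg.mpr ((div_le_one hp₀).mpr hp))
        (sub_le_self _ (by positivity))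
  have hW : 0 ≤ W := Real.rpow_nonneg (setIntegral_nonneg measurableSet_Icc fun x _ => hw x) _
  calc (∫ x in Icc a b, |Q.eval x - q.eval x| ^ p * w x) ^ (1 / p)
      ≤ M * D ^ m * W := integral_rpow_mul_rpow_le hp₀ (by positivity)
        ((ae_restrict_iff' measurableSet_Icc).mpr (ae_of_all _ htaylor)) hw hw_int
    _ ≤ 2 * D ^ (1 - 1 / p) * N * D ^ m * W := by gcongr
    _ = 2 * (D ^ (m : ℝ) * D ^ (1 - 1 / p)) * N * W := by rw [Real.rpow_natCast]; ring
    _ = 2 * D ^ (((m + 1 : ℕ) : ℝ) - 1 / p) * N * W := by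
      rw [← Real.rpow_add hD]
      push_cast
      ring_nf
end
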